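/- arXiv:2503.15688 — 4 statements merged into one kernel-verified Lean document; each statement's English description precedes it below -/
import Mathlib

section
/- For 0 < v < 1, the function f(a) = 2a^2/(a - 1 - av - v) + 1, defined for a > (1+v)/(1-v), attains its minimum at a = 2(1+v)/(1-v), and the minimum value is (v+3)^2/(1-v)^2. -/
theorem stmt_3 (v : ℝ) (hv0 : 0 < v) (hv1 : v < 1) :
    (2 * (2 * (1 + v) / (1 - v)) ^ 2 /
        ((2 * (1 + v) / (1 - v)) - 1 - (2 * (1 + v) / (1 - v)) * v - v) + 1
      = (v + 3) ^ 2 / (1 - v) ^ 2) ∧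
    ∀ a : ℝ, a > (1 + v) / (1 - v) →
      (v + 3) ^ 2 / (1 - v) ^ 2 ≤ 2 * a ^ 2 / (a - 1 - a * v - v) + 1 := by
  have h1 : (0:ℝ) < 1 - v := by linarith
  constructor
  · have hden : (2 * (1 + v) / (1 - v)) - 1 - (2 * (1 + v) / (1 - v)) * v - v
        = (1 + v) := by
      field_simp
      ring
    rw [hden]
    have h1v : (1:ℝ) + v ≠ 0 := by positivity
    field_simp
    ring
  · intro a ha
    have hd : 0 < a - 1 - a * v - v := by
      have : (1 + v) / (1 - v) * (1 - v) < a * (1 - v) := by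
        exact mul_lt_mul_of_pos_right ha h1
      rw [div_mul_cancel₀ _ (ne_of_gt h1)] at this
      nlinarith
    rw [div_add' _ _ _ (ne_of_gt hd), div_le_div_iff₀ (by positivity) hd]
    nlinarith [sq_nonneg (a * (1 - v) - 2 * (1 + v))]
end

section
/- For 0 < v < 1, the function f(u) = (1 - v + 3u + uv)/((u-v)(1-u)), defined for v < u < 1, attains its minimum at u = (3v+1)/(3+v), and the minimum value is (v+3)^2/(1-v)^2. -/
theorem stmt_5 (v : ℝ) (hv0 : 0 < v) (hv1 : v < 1) :
    ((1 - v + 3 * ((3 * v + 1) / (3 + v)) + ((3 * v + 1) / (3 + v)) * v) /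
        ((((3 * v + 1) / (3 + v)) - v) * (1 - ((3 * v + 1) / (3 + v))))
      = (v + 3) ^ 2 / (1 - v) ^ 2) ∧
    ∀ u : ℝ, v < u → u < 1 →
      (v + 3) ^ 2 / (1 - v) ^ 2 ≤ (1 - v + 3 * u + u * v) / ((u - v) * (1 - u)) := by
  have h3v : (0:ℝ) < 3 + v := by linarith
  have h1v : (0:ℝ) < 1 - v := by linarith
  constructor
  · have hA : (3 * v + 1) / (3 + v) - v = (1 - v) * (1 + v) / (3 + v) := by
      field_simp; ring
    have hB : 1 - (3 * v + 1) / (3 + v) = (2 - 2 * v) / (3 + v) := by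
      field_simp; ring
    rw [hA, hB]
    have hp1 : (0:ℝ) < 1 + v := by linarith
    have hp2 : (0:ℝ) < 2 - 2 * v := by linarith
    rw [div_eq_div_iff (mul_pos (div_pos (mul_pos h1v hp1) h3v) (div_pos hp2 h3v)).ne' (by positivity)]
    field_simp
    ring
  · intro u hu1 hu2
    have hd : 0 < (u - v) * (1 - u) := by nlinarith
    rw [div_le_div_iff₀ (by positivity) hd]
    nlinarith [mul_nonneg h1v.le (sq_nonneg (u * (3 + v) - (3 * v + 1)))]
end

section
/- For 0 < v < 1/3, the function g(u) = 1 + (1+u)^2/((1-u)(u+v)), defined for 0 < u < 1, attains its minimum at u = (1-3v)/(3-v), and the minimum value is 1 + 8(1-v)/(1+v)^2. -/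
theorem stmt_7 (v : ℝ) (hv0 : 0 < v) (hv1 : v < 1 / 3) :
    (1 + (1 + (1 - 3 * v) / (3 - v)) ^ 2 /
        ((1 - (1 - 3 * v) / (3 - v)) * ((1 - 3 * v) / (3 - v) + v))
      = 1 + 8 * (1 - v) / (1 + v) ^ 2) ∧
    ∀ u : ℝ, 0 < u → u < 1 →
      1 + 8 * (1 - v) / (1 + v) ^ 2 ≤ 1 + (1 + u) ^ 2 / ((1 - u) * (u + v)) := by
  have h3v : (0:ℝ) < 3 - v := by linarith
  have h1v : (0:ℝ) < 1 + v := by linarith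
  constructor
  · have h3v' : (3 - v) ≠ 0 := ne_of_gt h3v
    have h1 : (1 - (1 - 3 * v) / (3 - v)) = 2 * (1 + v) / (3 - v) := by
      field_simp; ring
    have h2 : ((1 - 3 * v) / (3 - v) + v) = (1 - v ^ 2) / (3 - v) := by
      field_simp; ring
    have h3 : (1 + (1 - 3 * v) / (3 - v)) = (4 - 4 * v) / (3 - v) := by
      field_simp; ring
    rw [h1, h2, h3]
    have hne1 : (1 : ℝ) - v ^ 2 ≠ 0 := by nlinarith
    have hne2 : (1 : ℝ) + v ≠ 0 := by linarith
    field_simp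
    ring
  · intro u hu0 hu1
    have hden : 0 < (1 - u) * (u + v) := by
      apply mul_pos <;> linarith
    have key : 8 * (1 - v) / (1 + v) ^ 2 ≤ (1 + u) ^ 2 / ((1 - u) * (u + v)) := by
      rw [div_le_div_iff₀ (by positivity) hden]
      nlinarith [sq_nonneg ((3 - v) * u - (1 - 3 * v))]
    linarith
end

section
/- Let 0 < v < 1, a = 2(1+v)/(1-v), and suppose d > (a^k - a^{k-1} - v a^k - v a^{k-1} + 2v)/(a-1) for some k ≥ 1. Then (2·(a^k - 1)/(a-1) + 2a^k)/d + 1 ≤ 2a^2/(a - 1 - av - v) + 1. -/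
/-!
With `a = 2(1+v)/(1-v)` one has `a(1-v) = 2(1+v)`, so the denominator `a - 1 - av - v` is
`1 + v`, and the hypothesis on `d` says `(a-1)d > a^(k-1)(1+v) + 2v`. The numerator of the
ratio is `2(a^(k+1) - 1)/(a-1) < 2a^2 · a^(k-1)/(a-1)`, and `a^(k-1)/((a-1)d) < 1/(1+v)`.
-/

namespace ZigZag

variable {a v : ℝ}

lemma mul_one_sub_eq (hv : v ≠ 1) (ha : a = 2 * (1 + v) / (1 - v)) :
    a * (1 - v) = 2 * (1 + v) := by
  rw [ha, div_mul_cancel₀ _ (sub_ne_zero.mpr hv.symm)]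

lemma one_lt_of_mul_one_sub_eq (hv0 : 0 ≤ v) (hv1 : v < 1) (h : a * (1 - v) = 2 * (1 + v)) :
    1 < a := by
  nlinarith

lemma sub_one_sub_mul_sub_eq (h : a * (1 - v) = 2 * (1 + v)) : a - 1 - a * v - v = 1 + v := by
  linarith

lemma geom_sum_add_pow (ha : a ≠ 1) (n : ℕ) :
    2 * (a ^ n - 1) / (a - 1) + 2 * a ^ n = 2 * (a ^ (n + 1) - 1) / (a - 1) := by
  have : a - 1 ≠ 0 := sub_ne_zero.mpr ha
  field_simp
  ring

lemma geom_sum_add_pow_div_le {c d : ℝ} {n : ℕ} (ha : 1 < a) (hc : 0 < c)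
    (hd : a ^ n * c < (a - 1) * d) :
    (2 * (a ^ (n + 1) - 1) / (a - 1) + 2 * a ^ (n + 1)) / d ≤ 2 * a ^ 2 / c := by
  have ha1 : 0 < a - 1 := sub_pos.mpr ha
  have hpow : 0 < a ^ n := pow_pos (by linarith) n
  have hd0 : 0 < d := pos_of_mul_pos_right ((mul_pos hpow hc).trans hd) ha1.le
  rw [geom_sum_add_pow ha.ne', div_div, div_le_div_iff₀ (mul_pos ha1 hd0) hc]
  calc 2 * (a ^ (n + 1 + 1) - 1) * c ≤ 2 * a ^ 2 * (a ^ n * c) := by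
        rw [show a ^ (n + 1 + 1) = a ^ 2 * a ^ n by ring]
        nlinarith
    _ ≤ 2 * a ^ 2 * ((a - 1) * d) := by gcongr

end ZigZag

open ZigZag in
theorem stmt_13 (v d : ℝ) (k : ℕ) (hv0 : 0 < v) (hv1 : v < 1) (hk : 1 ≤ k)
    (a : ℝ) (ha : a = 2 * (1 + v) / (1 - v))
    (hd : d > (a ^ k - a ^ (k - 1) - v * a ^ k - v * a ^ (k - 1) + 2 * v) / (a - 1)) :
    (2 * (a ^ k - 1) / (a - 1) + 2 * a ^ k) / d + 1 ≤ 2 * a ^ 2 / (a - 1 - a * v - v) + 1 := by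
  obtain ⟨n, rfl⟩ : ∃ n, k = n + 1 := ⟨k - 1, by omega⟩
  have hav := mul_one_sub_eq hv1.ne ha
  have ha1 := one_lt_of_mul_one_sub_eq hv0.le hv1 hav
  have hden := sub_one_sub_mul_sub_eq hav
  have hnum : a ^ (n + 1) - a ^ n - v * a ^ (n + 1) - v * a ^ n + 2 * v
      = a ^ n * (1 + v) + 2 * v := by
    rw [← hden]; ring
  rw [Nat.add_sub_cancel, hnum, gt_iff_lt, div_lt_iff₀ (sub_pos.mpr ha1)] at hd
  rw [hden]
  have hd' : a ^ n * (1 + v) < (a - 1) * d := by linarith [mul_comm d (a - 1)]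
  exact add_le_add_left (geom_sum_add_pow_div_le ha1 (by linarith) hd') 1
end
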